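/- arXiv:2509.20661 — 2 statements merged into one kernel-verified Lean document; each statement's English description precedes it below -/
import Mathlib

section
/- Let F be the free abelian group on generators e_1, e_2, e_3, ... (indexed by positive integers), and let N be the subgroup generated by the elements e_2 - 2·e_1, 2·e_{2k+1} - e_{2k+2} - e_{2k} for k ≥ 1, and 2·e_{2k} - e_{2k+1} - e_{2k-1} for k ≥ 1. Then the quotient F/N is isomorphic to ℤ, with the class of e_1 as a generator. -/
/-- The free abelian group on generators e_1, e_2, ... indexed by positive integers. -/
abbrev F : Type := ℕ+ →₀ ℤ

/-- The generator e_i. -/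
noncomputable def e (i : ℕ+) : F := Finsupp.single i 1

/-- The subgroup N generated by e_2 - 2e_1, 2e_{2k+1} - e_{2k+2} - e_{2k} (k ≥ 1),
and 2e_{2k} - e_{2k+1} - e_{2k-1} (k ≥ 1). -/
noncomputable def N : AddSubgroup F := AddSubgroup.closure
  ({e 2 - 2 • e 1} ∪
   {y | ∃ k : ℕ, ∃ _ : 1 ≤ k,
      y = 2 • e ⟨2 * k + 1, by omega⟩ - e ⟨2 * k + 2, by omega⟩ - e ⟨2 * k, by omega⟩} ∪
   {y | ∃ k : ℕ, ∃ _ : 1 ≤ k,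
      y = 2 • e ⟨2 * k, by omega⟩ - e ⟨2 * k + 1, by omega⟩ - e ⟨2 * k - 1, by omega⟩})

/-! The map `e i ↦ i` kills every generator of `N`. Conversely, modulo `N` the relations say that
the classes of `e 1, e 2, e 3, …` form an arithmetic progression starting `[e 1], 2 • [e 1]`, so
`[e i] = i • [e 1]` and `[x] = (∑ᵢ i * xᵢ) • [e 1]`; hence that map descends to an isomorphism
`F ⧸ N ≃+ ℤ`. -/

open QuotientAddGroup

theorem eq_add_nsmul_of_add_two_eq {G : Type*} [AddCommGroup G] {a : ℕ → G}
    (h : ∀ n, a (n + 2) = 2 • a (n + 1) - a n) (n : ℕ) : a n = a 0 + n • (a 1 - a 0) := by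
  induction n using Nat.twoStepInduction with
  | zero => simp
  | one => simp
  | more n ih₀ ih₁ =>
    rw [h, ih₀, ih₁]
    simp only [add_nsmul, one_nsmul, two_nsmul]
    abel

theorem e_two_sub_two_nsmul_e_one_mem : e 2 - 2 • e 1 ∈ N :=
  AddSubgroup.subset_closure (Or.inl (Or.inl rfl))

theorem e_succPNat_recurrence_mem (n : ℕ) :
    2 • e (n + 1).succPNat - e (n + 2).succPNat - e n.succPNat ∈ N := by
  apply AddSubgroup.subset_closure
  obtain ⟨j, rfl | rfl⟩ := Nat.even_or_odd' n
  · exact Or.inr ⟨j + 1, le_add_self, rfl⟩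
  · exact Or.inl (Or.inr ⟨j + 1, le_add_self, rfl⟩)

theorem mk_e_succPNat (n : ℕ) : (mk (e n.succPNat) : F ⧸ N) = (n + 1) • mk (e 1) := by
  set a : ℕ → F ⧸ N := fun n => mk (e n.succPNat)
  have h₁ : a 1 = 2 • a 0 := by
    have := (eq_zero_iff _).mpr e_two_sub_two_nsmul_e_one_mem
    rwa [mk_sub, mk_nsmul, sub_eq_zero] at this
  have h₂ (n : ℕ) : a (n + 2) = 2 • a (n + 1) - a n := by
    have := (eq_zero_iff _).mpr (e_succPNat_recurrence_mem n)
    rw [mk_sub, mk_sub, mk_nsmul, sub_sub, sub_eq_zero] at this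
    exact eq_sub_of_add_eq this.symm
  calc a n = a 0 + n • (a 1 - a 0) := eq_add_nsmul_of_add_two_eq h₂ n
    _ = (n + 1) • a 0 := by rw [h₁, two_nsmul, add_sub_cancel_right, add_comm, succ_nsmul]

theorem mk_e (i : ℕ+) : (mk (e i) : F ⧸ N) = (i : ℤ) • mk (e 1) := by
  rw [← PNat.succPNat_natPred i, mk_e_succPNat]
  simp

noncomputable def indexHom : F →+ ℤ := Finsupp.liftAddHom fun i => zmultiplesHom ℤ (i : ℤ)

@[simp] theorem indexHom_e (i : ℕ+) : indexHom (e i) = i := by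
  simp [indexHom, e]

/- The generators of `N` are written `e ⟨a, ha⟩` with `⟨a, ha⟩ : {n // 0 < n}`, a form that
`indexHom_e` does not match syntactically. -/
@[simp] theorem indexHom_e_mk (a : ℕ) (ha : 0 < a) : indexHom (e ⟨a, ha⟩) = a :=
  indexHom_e _

theorem N_le_ker_indexHom : N ≤ indexHom.ker := by
  rw [N, AddSubgroup.closure_le]
  rintro x ((rfl | ⟨k, hk, rfl⟩) | ⟨k, hk, rfl⟩) <;> simp <;> omega

theorem mk_eq_indexHom_zsmul (x : F) : (mk x : F ⧸ N) = indexHom x • mk (e 1) := by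
  refine DFunLike.congr_fun (Finsupp.addHom_ext' fun i => AddMonoidHom.ext_int ?_ :
    mk' N = (zmultiplesHom _ (mk (e 1))).comp indexHom) x
  change (mk (e i) : F ⧸ N) = indexHom (e i) • mk (e 1)
  rw [mk_e, indexHom_e]

/-- F/N is isomorphic to ℤ, with the class of e_1 as a generator. -/
theorem stmt10 : ∃ φ : (F ⧸ N) ≃+ ℤ, φ (QuotientAddGroup.mk (e 1)) = 1 := by
  let φ := lift N indexHom N_le_ker_indexHom
  have hφ : φ (mk (e 1)) = 1 := by simp [φ]
  refine ⟨φ.toAddEquiv (zmultiplesHom _ (mk (e 1))) ?_ ?_, hφ⟩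
  · exact addMonoidHom_ext _ (AddMonoidHom.ext fun x => (mk_eq_indexHom_zsmul x).symm)
  · exact AddMonoidHom.ext_int (by simpa using hφ)
end

section
/- Let G be an abelian group generated by elements x_1, x_2, x_3, ... subject only to the relations x_2 = 2·x_1, 2·x_{2k+1} = x_{2k+2} + x_{2k} (k ≥ 1), and 2·x_{2k} = x_{2k+1} + x_{2k-1} (k ≥ 1). Then G is an infinite cyclic group generated by x_1; in particular G is torsion-free. -/
/-! The two families of relations together say that the second difference
`x (i + 2) - 2 • x (i + 1) + x i` vanishes for every `i ≥ 1`, so together with `x 2 = 2 • x 1`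
the generators form an arithmetic progression: `x i = i • x 1`. Conversely the weight `e i ↦ i`
kills every relation, so it descends to a homomorphism `F ⧸ N → ℤ` sending `x 1` to `1`,
which is then an isomorphism. -/

theorem eq_add_nsmul_sub_of_add_eq_two_nsmul {G : Type*} [AddCommGroup G] {y : ℕ → G}
    (hy : ∀ n, y (n + 2) + y n = 2 • y (n + 1)) (n : ℕ) : y n = y 0 + n • (y 1 - y 0) := by
  induction n using Nat.twoStepInduction with
  | zero => simp
  | one => simp
  | more n ih₀ ih₁ =>
    rw [eq_sub_of_add_eq (hy n), ih₀, ih₁]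
    module

open QuotientAddGroup

noncomputable def x (i : ℕ+) : F ⧸ N := mk (e i)

lemma x_two : x 2 = 2 • x 1 := by
  have : e 2 - 2 • e 1 ∈ N := AddSubgroup.subset_closure (Or.inl (Or.inl rfl))
  rw [← sub_eq_zero]
  exact (eq_zero_iff _).2 this

lemma x_succPNat_recurrence (n : ℕ) :
    x (n + 2).succPNat + x n.succPNat = 2 • x (n + 1).succPNat := by
  rw [← sub_eq_zero, ← neg_eq_zero, neg_sub, sub_add_eq_sub_sub]
  -- `x n.succPNat` is the generator `x_{n+1}`: even `n` is the third family of relations,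
  -- odd `n` the second, both at `k = j + 1`.
  obtain ⟨j, rfl | rfl⟩ := Nat.even_or_odd' n
  · exact (eq_zero_iff _).2 <| AddSubgroup.subset_closure <| Or.inr ⟨j + 1, by omega, rfl⟩
  · exact (eq_zero_iff _).2 <| AddSubgroup.subset_closure <|
      Or.inl <| Or.inr ⟨j + 1, by omega, rfl⟩

lemma x_eq_nsmul (i : ℕ+) : x i = (i : ℕ) • x 1 := by
  have h := eq_add_nsmul_sub_of_add_eq_two_nsmul (y := fun n => x n.succPNat)
    x_succPNat_recurrence i.natPred
  change x i.natPred.succPNat = x 1 + i.natPred • (x 2 - x 1) at h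
  rw [PNat.succPNat_natPred] at h
  rw [h, x_two, ← PNat.natPred_add_one i]
  module

noncomputable def weight : F →+ ℤ :=
  Finsupp.liftAddHom fun i => AddMonoidHom.mulRight ((i : ℕ) : ℤ)

lemma weight_e (i : ℕ+) : weight (e i) = (i : ℕ) := by
  simp [weight, e]

-- The indices in `N` elaborate as bare subtype terms, which `weight_e` does not match syntactically.
lemma weight_e_mk (n : ℕ) (h : 0 < n) : weight (e ⟨n, h⟩) = n := weight_e ⟨n, h⟩

lemma N_le_ker_weight : N ≤ weight.ker := by
  rw [N, AddSubgroup.closure_le]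
  rintro _ ((rfl | ⟨k, -, rfl⟩) | ⟨k, hk, rfl⟩) <;> simp [weight_e, weight_e_mk] <;> omega

lemma mk_eq_weight_zsmul (f : F) : (mk f : F ⧸ N) = weight f • x 1 := by
  suffices mk' N = (zmultiplesHom _ (x 1)).comp weight from DFunLike.congr_fun this f
  ext i
  change x i = weight (e i) • x 1
  rw [weight_e, natCast_zsmul, x_eq_nsmul]

noncomputable def quotEquivInt : F ⧸ N ≃+ ℤ where
  toFun := lift N weight N_le_ker_weight
  invFun z := z • x 1
  left_inv g := by
    induction g using QuotientAddGroup.induction_on with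
    | H f => exact (mk_eq_weight_zsmul f).symm
  right_inv z := by simp [x, weight_e]
  map_add' := map_add _

/-- The abelian group presented by generators x_i (i ≥ 1) and the relations
x_2 = 2x_1, 2x_{2k+1} = x_{2k+2} + x_{2k}, 2x_{2k} = x_{2k+1} + x_{2k-1} (k ≥ 1) is
infinite cyclic generated by x_1; in particular it is torsion-free. -/
theorem stmt18 :
    AddSubgroup.closure {(QuotientAddGroup.mk (e 1) : F ⧸ N)} = ⊤ ∧
    Nonempty ((F ⧸ N) ≃+ ℤ) ∧
    ∀ (g : F ⧸ N) (z : ℤ), z ≠ 0 → z • g = 0 → g = 0 := by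
  have : IsAddTorsionFree (F ⧸ N) :=
    quotEquivInt.injective.isAddTorsionFree quotEquivInt.toAddMonoidHom
  refine ⟨?_, ⟨quotEquivInt⟩, fun g z hz => (IsAddTorsionFree.zsmul_eq_zero_iff_right hz).1⟩
  refine eq_top_iff.2 fun g _ => ?_
  induction g using QuotientAddGroup.induction_on with
  | H f => exact AddSubgroup.mem_closure_singleton.2 ⟨_, (mk_eq_weight_zsmul f).symm⟩
end
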